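/- Fix a ∈ [1,3] and r ∈ (0, 1/16], and let δ = ln 2 / ln(1/r). Suppose for each k ≥ 0 a function a_k : {−1,1}^k → [1,a] is given, with a_0 ≡ 1, and let f : 𝓔 → ℝ be defined by f(ε) = Σ_{k=1}^∞ (a_{k−1}(ε_1,…,ε_{k−1})/2) r^{k−1} ε_k. Let K = f(𝓔), let σ be the product probability measure on 𝓔, and let μ = f_*σ be the pushforward measure on K. Then K is compact and there is a constant C₀ ≥ 1 (depending only on a and r) such that C₀^{−1} ρ^δ ≤ μ(B(x,ρ)) ≤ C₀ ρ^δ for every x ∈ K and every 0 < ρ ≤ diam K; that is, K is Ahlfors regular of dimension δ. -/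

import Mathlib

/-!
Two sign sequences whose first difference is at index `N` are sent by `f` to points at distance
comparable to `r ^ N`: the terms before `N` cancel, the `N`-th one has size at least `r ^ N`, and
the tail is at most `a r ^ (N + 1) / (1 - r)`, which is smaller than `r ^ N` since `a r < 1 - r`.
Hence a ball of radius about `r ^ N` centred in `K` is sandwiched between images of cylinders of
length about `N`, whose measure is `2⁻¹ ^ N = (r ^ N) ^ δ`.
-/

open MeasureTheory

noncomputable section

/-- The sign `±1 : ℝ` associated to a boolean letter (so `𝓔 = {−1,1}^{ℕ≥1}` is encoded as
`ℕ → Bool`, index `k` corresponding to the paper's coordinate `ε_{k+1}`). -/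
def sgn (b : Bool) : ℝ := if b then 1 else -1

/-- `f(ε) = Σ_{k=1}^∞ (a_{k−1}(ε)/2) r^{k−1} ε_k`, written with 0-based indices. -/
def fInf (r : ℝ) (A : ℕ → (ℕ → Bool) → ℝ) (ε : ℕ → Bool) : ℝ :=
  ∑' k : ℕ, A k ε / 2 * r ^ k * sgn (ε k)

open Metric Set Filter Topology PiNat

def IsAhlforsRegular {X : Type*} [PseudoMetricSpace X] [MeasurableSpace X] (μ : Measure X)
    (K : Set X) (δ : ℝ) : Prop :=
  ∃ C₀ : ℝ, 1 ≤ C₀ ∧ ∀ x ∈ K, ∀ ρ : ℝ, 0 < ρ → ρ ≤ diam K →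
    C₀⁻¹ * ρ ^ δ ≤ (μ (closedBall x ρ)).toReal ∧ (μ (closedBall x ρ)).toReal ≤ C₀ * ρ ^ δ

section Exponent

variable {r : ℝ}

lemma log_two_div_log_one_div_pos (hr0 : 0 < r) (hr1 : r < 1) :
    0 < Real.log 2 / Real.log (1 / r) :=
  div_pos (Real.log_pos one_lt_two) (Real.log_pos (one_lt_one_div hr0 hr1))

lemma pow_rpow_log_two_div_log_one_div (hr0 : 0 < r) (hr1 : r < 1) (n : ℕ) :
    (r ^ n) ^ (Real.log 2 / Real.log (1 / r)) = 2⁻¹ ^ n := by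
  have hlog : Real.log r ≠ 0 := (Real.log_neg hr0 hr1).ne
  have hr : r ^ (Real.log 2 / Real.log (1 / r)) = 2⁻¹ := by
    rw [Real.rpow_def_of_pos hr0, one_div, Real.log_inv, div_neg, mul_neg,
      mul_div_cancel₀ _ hlog, Real.exp_neg, Real.exp_log two_pos]
  rw [← Real.rpow_pow_comm hr0.le, hr]

end Exponent

section Cylinders

variable {E : ℕ → Type*} {X : Type*} [PseudoMetricSpace X] {g : (∀ n, E n) → X} {c C r ρ : ℝ}

theorem continuous_of_dist_le_mul_pow [∀ n, TopologicalSpace (E n)] [∀ n, DiscreteTopology (E n)]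
    (hr0 : 0 ≤ r) (hr1 : r < 1)
    (hupper : ∀ n x, ∀ y ∈ cylinder x n, dist (g x) (g y) ≤ C * r ^ n) : Continuous g := by
  refine continuous_iff'.2 fun x η hη => ?_
  have hlim : Tendsto (fun n => C * r ^ n) atTop (𝓝 0) := by
    simpa using (tendsto_pow_atTop_nhds_zero_of_lt_one hr0 hr1).const_mul C
  obtain ⟨n, hn⟩ := (hlim.eventually (gt_mem_nhds hη)).exists
  filter_upwards [(isOpen_cylinder E x n).mem_nhds (self_mem_cylinder x n)] with y hy
  rw [dist_comm]
  exact (hupper n x y hy).trans_lt hn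

lemma diam_range_le_of_dist_le_mul_pow [Nonempty (∀ n, E n)]
    (hupper : ∀ n x, ∀ y ∈ cylinder x n, dist (g x) (g y) ≤ C * r ^ n) : diam (range g) ≤ C := by
  have hC : ∀ x y, dist (g x) (g y) ≤ C := fun x y => by simpa using hupper 0 x y (by simp)
  obtain ⟨x⟩ := ‹Nonempty (∀ n, E n)›
  refine diam_le_of_forall_dist_le (dist_nonneg.trans (hC x x)) ?_
  rintro _ ⟨y, rfl⟩ _ ⟨z, rfl⟩
  exact hC y z

lemma cylinder_subset_preimage_closedBall
    (hupper : ∀ n x, ∀ y ∈ cylinder x n, dist (g x) (g y) ≤ C * r ^ n) (x : ∀ n, E n) {n : ℕ}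
    (h : C * r ^ n ≤ ρ) : cylinder x n ⊆ g ⁻¹' closedBall (g x) ρ := fun y hy => by
  rw [mem_preimage, mem_closedBall, dist_comm]
  exact (hupper n x y hy).trans h

lemma preimage_closedBall_subset_cylinder
    (hlower : ∀ x y, x ≠ y → c * r ^ firstDiff x y ≤ dist (g x) (g y)) (x : ∀ n, E n) {n : ℕ}
    (h : ∀ k < n, ρ < c * r ^ k) : g ⁻¹' closedBall (g x) ρ ⊆ cylinder x n := by
  intro y hy
  by_contra hyn
  have hne : y ≠ x := by rintro rfl; exact hyn (self_mem_cylinder y n)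
  rw [mem_cylinder_iff_le_firstDiff hne, not_le] at hyn
  exact (h _ hyn).not_ge ((hlower y x hne).trans hy)

end Cylinders

section CantorCoding

variable {X : Type*} [PseudoMetricSpace X] [MeasurableSpace X] [BorelSpace X]
  {g : (ℕ → Bool) → X} {σ : Measure (ℕ → Bool)} {c C r δ ρ : ℝ}

lemma toReal_measure_map_closedBall_le [IsFiniteMeasure σ] (hc : 0 < c) (hr0 : 0 < r)
    (hr1 : r < 1) (hδ : δ = Real.log 2 / Real.log (1 / r))
    (hσ : ∀ n x, σ (cylinder x n) = 2⁻¹ ^ n) (hg : Measurable g)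
    (hlower : ∀ x y, x ≠ y → c * r ^ firstDiff x y ≤ dist (g x) (g y))
    (x : ℕ → Bool) (hρ : 0 < ρ) :
    (σ.map g (closedBall (g x) ρ)).toReal ≤ c⁻¹ ^ δ * ρ ^ δ := by
  classical
  subst hδ
  have hex : ∃ n, c * r ^ n ≤ ρ := by
    obtain ⟨n, hn⟩ := exists_pow_lt_of_lt_one (div_pos hρ hc) hr1
    exact ⟨n, by rw [lt_div_iff₀ hc] at hn; linarith⟩
  set n := Nat.find hex
  have hle : σ.map g (closedBall (g x) ρ) ≤ 2⁻¹ ^ n := by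
    rw [Measure.map_apply hg measurableSet_closedBall, ← hσ n x]
    exact measure_mono (preimage_closedBall_subset_cylinder hlower x
      fun k hk => not_le.1 (Nat.find_min hex hk))
  calc (σ.map g (closedBall (g x) ρ)).toReal ≤ 2⁻¹ ^ n := by
        simpa using ENNReal.toReal_mono (by simp) hle
    _ = (r ^ n) ^ (Real.log 2 / Real.log (1 / r)) := by
        rw [pow_rpow_log_two_div_log_one_div hr0 hr1]
    _ ≤ (c⁻¹ * ρ) ^ (Real.log 2 / Real.log (1 / r)) := by
        refine Real.rpow_le_rpow (by positivity) ?_ (log_two_div_log_one_div_pos hr0 hr1).le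
        rw [le_inv_mul_iff₀ hc]
        exact Nat.find_spec hex
    _ = _ := Real.mul_rpow (inv_nonneg.2 hc.le) hρ.le

lemma le_toReal_measure_map_closedBall [IsFiniteMeasure σ] (hr0 : 0 < r) (hr1 : r < 1)
    (hδ : δ = Real.log 2 / Real.log (1 / r)) (hσ : ∀ n x, σ (cylinder x n) = 2⁻¹ ^ n)
    (hg : Measurable g) (hupper : ∀ n x, ∀ y ∈ cylinder x n, dist (g x) (g y) ≤ C * r ^ n)
    (x : ℕ → Bool) (hρ : 0 < ρ) (hρC : ρ ≤ C) :
    (r / C) ^ δ * ρ ^ δ ≤ (σ.map g (closedBall (g x) ρ)).toReal := by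
  subst hδ
  have hC : 0 < C := hρ.trans_le hρC
  obtain ⟨n, hlt, hle⟩ := exists_nat_pow_near_of_lt_one (div_pos hρ hC)
    ((div_le_one hC).2 hρC) hr0 hr1
  have hge : 2⁻¹ ^ (n + 1) ≤ σ.map g (closedBall (g x) ρ) := by
    rw [Measure.map_apply hg measurableSet_closedBall, ← hσ (n + 1) x]
    refine measure_mono (cylinder_subset_preimage_closedBall hupper x ?_)
    rw [lt_div_iff₀ hC] at hlt
    linarith
  calc _ = (r * (ρ / C)) ^ (Real.log 2 / Real.log (1 / r)) := by
        rw [← Real.mul_rpow (by positivity) hρ.le]; ring_nf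
    _ ≤ (r ^ (n + 1)) ^ (Real.log 2 / Real.log (1 / r)) := by
        refine Real.rpow_le_rpow (by positivity) ?_ (log_two_div_log_one_div_pos hr0 hr1).le
        rw [pow_succ']
        exact mul_le_mul_of_nonneg_left hle hr0.le
    _ = 2⁻¹ ^ (n + 1) := pow_rpow_log_two_div_log_one_div hr0 hr1 _
    _ ≤ (σ.map g (closedBall (g x) ρ)).toReal := by
        simpa using ENNReal.toReal_mono (measure_ne_top _ _) hge

theorem isAhlforsRegular_map_range (hc : 0 < c) (hr0 : 0 < r) (hr1 : r < 1)
    (hδ : δ = Real.log 2 / Real.log (1 / r)) (hσ : ∀ n x, σ (cylinder x n) = 2⁻¹ ^ n)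
    (hupper : ∀ n x, ∀ y ∈ cylinder x n, dist (g x) (g y) ≤ C * r ^ n)
    (hlower : ∀ x y, x ≠ y → c * r ^ firstDiff x y ≤ dist (g x) (g y)) :
    IsAhlforsRegular (σ.map g) (range g) δ := by
  have : IsProbabilityMeasure σ := ⟨by simpa using hσ 0 (fun _ => true)⟩
  have hg : Measurable g := (continuous_of_dist_le_mul_pow hr0.le hr1 hupper).measurable
  refine ⟨max 1 (max (c⁻¹ ^ δ) ((r / C) ^ δ)⁻¹), le_max_left _ _, ?_⟩
  rintro _ ⟨x, rfl⟩ ρ hρ hρdiam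
  have hρC : ρ ≤ C := hρdiam.trans (diam_range_le_of_dist_le_mul_pow hupper)
  have hC : 0 < C := hρ.trans_le hρC
  constructor
  · refine le_trans (mul_le_mul_of_nonneg_right ?_ (by positivity))
      (le_toReal_measure_map_closedBall hr0 hr1 hδ hσ hg hupper x hρ hρC)
    exact inv_le_of_inv_le₀ (by positivity) (le_max_of_le_right (le_max_right _ _))
  · exact (toReal_measure_map_closedBall_le hc hr0 hr1 hδ hσ hg hlower x hρ).trans
      (mul_le_mul_of_nonneg_right (le_max_of_le_right (le_max_left _ _)) (by positivity))

end CantorCoding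

section Coding

variable {a r : ℝ} {A : ℕ → (ℕ → Bool) → ℝ}

def fInfTerm (r : ℝ) (A : ℕ → (ℕ → Bool) → ℝ) (ε : ℕ → Bool) (k : ℕ) : ℝ :=
  A k ε / 2 * r ^ k * sgn (ε k)

lemma fInf_eq_tsum_fInfTerm (ε : ℕ → Bool) : fInf r A ε = ∑' k, fInfTerm r A ε k := rfl

lemma abs_sgn (b : Bool) : |sgn b| = 1 := by cases b <;> simp [sgn]

lemma abs_sgn_sub_sgn {b b' : Bool} (h : b ≠ b') : |sgn b - sgn b'| = 2 := by
  cases b <;> cases b' <;> simp_all [sgn] <;> norm_num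

lemma abs_fInfTerm_le (hr0 : 0 ≤ r) (hA : ∀ k ε, |A k ε| ≤ a) (ε : ℕ → Bool) (k : ℕ) :
    |fInfTerm r A ε k| ≤ a / 2 * r ^ k := by
  rw [fInfTerm, abs_mul, abs_sgn, mul_one, abs_mul, abs_div, abs_two, abs_pow, abs_of_nonneg hr0]
  gcongr
  exact hA k ε

lemma summable_fInfTerm (hr0 : 0 ≤ r) (hr1 : r < 1) (hA : ∀ k ε, |A k ε| ≤ a)
    (ε : ℕ → Bool) : Summable (fInfTerm r A ε) :=
  ((summable_geometric_of_lt_one hr0 hr1).mul_left (a / 2)).of_norm_bounded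
    (f := fInfTerm r A ε) fun k => (Real.norm_eq_abs _).trans_le (abs_fInfTerm_le hr0 hA ε k)

lemma abs_tsum_fInfTerm_sub_le (hr0 : 0 ≤ r) (hr1 : r < 1) (hA : ∀ k ε, |A k ε| ≤ a)
    (ε ε' : ℕ → Bool) (N : ℕ) :
    |∑' k, (fInfTerm r A ε (k + N) - fInfTerm r A ε' (k + N))| ≤ a / (1 - r) * r ^ N := by
  have hgeo : HasSum (fun k : ℕ => a * r ^ N * r ^ k) (a / (1 - r) * r ^ N) := by
    rw [show a / (1 - r) * r ^ N = a * r ^ N * (1 - r)⁻¹ by ring]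
    exact (hasSum_geometric_of_lt_one hr0 hr1).mul_left _
  rw [← Real.norm_eq_abs]
  refine tsum_of_norm_bounded hgeo fun k => ?_
  calc ‖fInfTerm r A ε (k + N) - fInfTerm r A ε' (k + N)‖
      ≤ |fInfTerm r A ε (k + N)| + |fInfTerm r A ε' (k + N)| := norm_sub_le _ _
    _ ≤ a / 2 * r ^ (k + N) + a / 2 * r ^ (k + N) :=
        add_le_add (abs_fInfTerm_le hr0 hA ε _) (abs_fInfTerm_le hr0 hA ε' _)
    _ = a * r ^ N * r ^ k := by ring

lemma fInfTerm_eq_of_mem_cylinder (hAdep : ∀ k ε ε', (∀ j < k, ε j = ε' j) → A k ε = A k ε')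
    {ε ε' : ℕ → Bool} {k : ℕ} (h : ε' ∈ cylinder ε (k + 1)) :
    fInfTerm r A ε' k = fInfTerm r A ε k := by
  rw [fInfTerm, fInfTerm, h k k.lt_succ_self,
    hAdep k ε' ε fun j hj => h j (hj.trans k.lt_succ_self)]

lemma fInf_sub_fInf_eq_tsum (hr0 : 0 ≤ r) (hr1 : r < 1) (hA : ∀ k ε, |A k ε| ≤ a)
    (hAdep : ∀ k ε ε', (∀ j < k, ε j = ε' j) → A k ε = A k ε') {ε ε' : ℕ → Bool} {N : ℕ}
    (h : ε' ∈ cylinder ε N) :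
    fInf r A ε - fInf r A ε' = ∑' k, (fInfTerm r A ε (k + N) - fInfTerm r A ε' (k + N)) := by
  have hs := summable_fInfTerm hr0 hr1 hA ε
  have hs' := summable_fInfTerm hr0 hr1 hA ε'
  have hhead : ∑ k ∈ Finset.range N, (fInfTerm r A ε k - fInfTerm r A ε' k) = 0 :=
    Finset.sum_eq_zero fun k hk => sub_eq_zero.2 (fInfTerm_eq_of_mem_cylinder hAdep
      (cylinder_anti ε (Finset.mem_range.1 hk) h)).symm
  rw [fInf_eq_tsum_fInfTerm, fInf_eq_tsum_fInfTerm, ← hs.tsum_sub hs',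
    ← (hs.sub hs').sum_add_tsum_nat_add N, hhead, zero_add]

lemma abs_fInf_sub_le (hr0 : 0 ≤ r) (hr1 : r < 1) (hA : ∀ k ε, |A k ε| ≤ a)
    (hAdep : ∀ k ε ε', (∀ j < k, ε j = ε' j) → A k ε = A k ε') {ε ε' : ℕ → Bool} {N : ℕ}
    (h : ε' ∈ cylinder ε N) : |fInf r A ε - fInf r A ε'| ≤ a / (1 - r) * r ^ N := by
  rw [fInf_sub_fInf_eq_tsum hr0 hr1 hA hAdep h]
  exact abs_tsum_fInfTerm_sub_le hr0 hr1 hA ε ε' N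

lemma le_abs_fInf_sub (hr0 : 0 ≤ r) (hr1 : r < 1) (hA : ∀ k ε, |A k ε| ≤ a)
    (hA1 : ∀ k ε, 1 ≤ |A k ε|) (hAdep : ∀ k ε ε', (∀ j < k, ε j = ε' j) → A k ε = A k ε')
    {ε ε' : ℕ → Bool} (hne : ε ≠ ε') :
    (1 - a * r / (1 - r)) * r ^ firstDiff ε ε' ≤ |fInf r A ε - fInf r A ε'| := by
  set N := firstDiff ε ε'
  have hagree : ε' ∈ cylinder ε N := fun j hj => (apply_eq_of_lt_firstDiff hj).symm
  have hs := (summable_nat_add_iff N).2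
    ((summable_fInfTerm hr0 hr1 hA ε).sub (summable_fInfTerm hr0 hr1 hA ε'))
  have hlead : r ^ N ≤ |fInfTerm r A ε N - fInfTerm r A ε' N| := by
    rw [fInfTerm, fInfTerm, hAdep N ε' ε hagree,
      ← mul_sub, abs_mul, abs_sgn_sub_sgn (apply_firstDiff_ne hne), abs_mul, abs_div, abs_two,
      abs_pow, abs_of_nonneg hr0]
    nlinarith [hA1 N ε, pow_nonneg hr0 N]
  have htail := abs_tsum_fInfTerm_sub_le hr0 hr1 hA ε ε' (N + 1)
  simp only [← add_assoc, ← add_right_comm _ 1 N] at htail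
  rw [fInf_sub_fInf_eq_tsum hr0 hr1 hA hAdep hagree, hs.tsum_eq_zero_add, zero_add]
  refine le_trans ?_ (abs_sub_abs_le_abs_add _ _)
  have h1r : 1 - r ≠ 0 := (sub_pos.2 hr1).ne'
  have : (1 - a * r / (1 - r)) * r ^ N = r ^ N - a / (1 - r) * r ^ (N + 1) := by
    field_simp
    ring
  linarith

end Coding

theorem stmt2_general (a r : ℝ) (ha3 : a ≤ 3) (hr0 : 0 < r) (hr1 : r ≤ 1 / 16)
    (δ : ℝ) (hδ : δ = Real.log 2 / Real.log (1 / r))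
    (A : ℕ → (ℕ → Bool) → ℝ)
    (hAbd : ∀ k ε, 1 ≤ A k ε ∧ A k ε ≤ a)
    (hAdep : ∀ k ε ε', (∀ j < k, ε j = ε' j) → A k ε = A k ε')
    (σ : Measure (ℕ → Bool))
    (hcyl : ∀ (n : ℕ) (ε : ℕ → Bool),
      σ {ε' | ∀ k < n, ε' k = ε k} = (2 : ENNReal)⁻¹ ^ n) :
    IsCompact (Set.range (fInf r A)) ∧
    ∃ C₀ : ℝ, 1 ≤ C₀ ∧ ∀ x ∈ Set.range (fInf r A), ∀ ρ : ℝ,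
      0 < ρ → ρ ≤ Metric.diam (Set.range (fInf r A)) →
      C₀⁻¹ * ρ ^ δ ≤ ((σ.map (fInf r A)) (Metric.closedBall x ρ)).toReal ∧
      ((σ.map (fInf r A)) (Metric.closedBall x ρ)).toReal ≤ C₀ * ρ ^ δ := by
  have hr1' : r < 1 := by linarith
  have hA : ∀ k ε, |A k ε| ≤ a := fun k ε =>
    abs_le.2 ⟨by linarith [hAbd k ε], (hAbd k ε).2⟩
  have hA1 : ∀ k ε, 1 ≤ |A k ε| := fun k ε => (hAbd k ε).1.trans (le_abs_self _)
  have hupper : ∀ n ε, ∀ ε' ∈ cylinder ε n,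
      dist (fInf r A ε) (fInf r A ε') ≤ a / (1 - r) * r ^ n := fun n ε ε' h =>
    abs_fInf_sub_le hr0.le hr1' hA hAdep h
  have hlower : ∀ ε ε', ε ≠ ε' →
      (1 - a * r / (1 - r)) * r ^ firstDiff ε ε' ≤ dist (fInf r A ε) (fInf r A ε') :=
    fun ε ε' hne => le_abs_fInf_sub hr0.le hr1' hA hA1 hAdep hne
  have hc : 0 < 1 - a * r / (1 - r) := by
    rw [sub_pos, div_lt_one (by linarith)]
    nlinarith
  exact ⟨isCompact_range (continuous_of_dist_le_mul_pow hr0.le hr1' hupper),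
    isAhlforsRegular_map_range hc hr0 hr1' hδ hcyl hupper hlower⟩

/-- Let `a ∈ [1,3]`, `r ∈ (0,1/16]`, `δ = ln 2 / ln(1/r)`, and let
`f : 𝓔 → ℝ` be built from coefficients `a_k(ε) ∈ [1,a]` depending only on the first `k`
letters, with `a_0 ≡ 1`. Let `σ` be the product probability measure on `𝓔` (characterized
by its values `2⁻ⁿ` on cylinders of length `n`), `K = f(𝓔)` and `μ = f_*σ`. Then `K` is
compact and `μ` witnesses that `K` is Ahlfors regular of dimension `δ`:
`C₀⁻¹ ρ^δ ≤ μ(B(x,ρ)) ≤ C₀ ρ^δ` for `x ∈ K` and `0 < ρ ≤ diam K`. -/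
theorem stmt2 (a r : ℝ) (ha1 : 1 ≤ a) (ha3 : a ≤ 3) (hr0 : 0 < r) (hr1 : r ≤ 1 / 16)
    (δ : ℝ) (hδ : δ = Real.log 2 / Real.log (1 / r))
    (A : ℕ → (ℕ → Bool) → ℝ)
    (hA0 : ∀ ε, A 0 ε = 1)
    (hAbd : ∀ k ε, 1 ≤ A k ε ∧ A k ε ≤ a)
    (hAdep : ∀ k ε ε', (∀ j < k, ε j = ε' j) → A k ε = A k ε')
    (σ : Measure (ℕ → Bool)) (hprob : IsProbabilityMeasure σ)
    (hcyl : ∀ (n : ℕ) (ε : ℕ → Bool),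
      σ {ε' | ∀ k < n, ε' k = ε k} = (2 : ENNReal)⁻¹ ^ n) :
    IsCompact (Set.range (fInf r A)) ∧
    ∃ C₀ : ℝ, 1 ≤ C₀ ∧ ∀ x ∈ Set.range (fInf r A), ∀ ρ : ℝ,
      0 < ρ → ρ ≤ Metric.diam (Set.range (fInf r A)) →
      C₀⁻¹ * ρ ^ δ ≤ ((σ.map (fInf r A)) (Metric.closedBall x ρ)).toReal ∧
      ((σ.map (fInf r A)) (Metric.closedBall x ρ)).toReal ≤ C₀ * ρ ^ δ :=
  stmt2_general a r ha3 hr0 hr1 δ hδ A hAbd hAdep σ hcyl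

end
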